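/- Let A and B be join-semilattices with zero. For a homomorphism φ from the join-semilattice A∖{0} to the meet-semilattice of ideals of B (ordered by inclusion, meet = intersection), define ε(φ) = { ⟨x, y⟩ ∈ A × B : y ∈ φ(x) } ∪ ⊥, where ⊥ = (A × {0}) ∪ ({0} × B). Then ε is an order isomorphism between the set of such homomorphisms (ordered pointwise) and the set of bi-ideals of A × B (ordered by inclusion). -/

import Mathlib

/-- The nonzero elements of a join-semilattice with zero form a join-semilattice. -/
instance nzSemilatticeSup {α : Type*} [SemilatticeSup α] [OrderBot α] :
    SemilatticeSup {a : α // a ≠ ⊥} :=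
  Subtype.semilatticeSup fun {_ _} hx _ hxy => hx (le_bot_iff.mp (hxy ▸ le_sup_left))

/-- `⊥_{A,B} = (A × {0}) ∪ ({0} × B)`. -/
def botSetAB {α β : Type*} [SemilatticeSup α] [OrderBot α] [SemilatticeSup β] [OrderBot β] :
    Set (α × β) :=
  {p | p.1 = ⊥ ∨ p.2 = ⊥}

/-- A bi-ideal of `A × B`: a downward-closed subset containing `⊥_{A,B}` and closed under
lateral joins. -/
def IsBiIdeal {α β : Type*} [SemilatticeSup α] [OrderBot α] [SemilatticeSup β] [OrderBot β]
    (I : Set (α × β)) : Prop :=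
  (∀ p ∈ I, ∀ q : α × β, q ≤ p → q ∈ I) ∧
    botSetAB ⊆ I ∧
    (∀ p ∈ I, ∀ q ∈ I, (p : α × β).1 = (q : α × β).1 → (p.1, p.2 ⊔ q.2) ∈ I) ∧
    (∀ p ∈ I, ∀ q ∈ I, (p : α × β).2 = (q : α × β).2 → (p.1 ⊔ q.1, p.2) ∈ I)

/-- `ε(φ) = { ⟨x, y⟩ : y ∈ φ(x) } ∪ ⊥_{A,B}`. -/
def eps {α β : Type*} [SemilatticeSup α] [OrderBot α] [SemilatticeSup β] [OrderBot β]
    (φ : {a : α // a ≠ ⊥} → Order.Ideal β) : Set (α × β) :=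
  {p | ∃ h : p.1 ≠ ⊥, p.2 ∈ φ ⟨p.1, h⟩} ∪ botSetAB

section Aux

variable {α β : Type*} [SemilatticeSup α] [OrderBot α] [SemilatticeSup β] [OrderBot β]

lemma mem_eps_iff (φ : {a : α // a ≠ ⊥} → Order.Ideal β) (p : α × β) :
    p ∈ eps φ ↔ p.1 = ⊥ ∨ ∃ h : p.1 ≠ ⊥, p.2 ∈ φ ⟨p.1, h⟩ := by
  constructor
  · rintro (⟨h, hm⟩ | h1 | h2)
    · exact Or.inr ⟨h, hm⟩
    · exact Or.inl h1
    · by_cases h1 : p.1 = ⊥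
      · exact Or.inl h1
      · exact Or.inr ⟨h1, h2 ▸ (φ ⟨p.1, h1⟩).bot_mem⟩
  · rintro (h | h)
    · exact Or.inr (Or.inl h)
    · exact Or.inl h

lemma isBiIdeal_eps (φ : {a : α // a ≠ ⊥} → Order.Ideal β)
    (hφ : ∀ x y : {a : α // a ≠ ⊥}, (↑(φ (x ⊔ y)) : Set β) = ↑(φ x) ∩ ↑(φ y)) :
    IsBiIdeal (eps φ) := by
  have anti : ∀ x y : {a : α // a ≠ ⊥}, x ≤ y → ∀ b ∈ φ y, b ∈ φ x := by
    intro x y h b hb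
    have h1 := hφ x y
    rw [sup_eq_right.mpr h] at h1
    have : b ∈ (↑(φ y) : Set β) := hb
    rw [h1] at this
    exact this.1
  refine ⟨?_, ?_, ?_, ?_⟩
  · rintro ⟨x, b⟩ hp ⟨x', b'⟩ ⟨h1, h2⟩
    rw [mem_eps_iff] at hp ⊢
    rcases hp with h | ⟨h, hm⟩
    · exact Or.inl (le_bot_iff.mp (h ▸ h1))
    · by_cases hx' : x' = ⊥
      · exact Or.inl hx'
      · exact Or.inr ⟨hx', (φ ⟨x', hx'⟩).lower h2
          (anti ⟨x', hx'⟩ ⟨x, h⟩ (Subtype.mk_le_mk.mpr h1) b hm)⟩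
  · exact Set.subset_union_right
  · rintro ⟨x, b⟩ hp ⟨x', c⟩ hq (rfl : x = x')
    rw [mem_eps_iff] at hp hq ⊢
    rcases hp with h | ⟨h, hm⟩
    · exact Or.inl h
    rcases hq with h' | ⟨h', hm'⟩
    · exact Or.inl h'
    · exact Or.inr ⟨h, Order.Ideal.sup_mem hm hm'⟩
  · rintro ⟨x, b⟩ hp ⟨x', c⟩ hq (rfl : b = c)
    rw [mem_eps_iff] at hp hq ⊢
    rcases hp with h | ⟨h, hm⟩
    · rcases hq with h' | ⟨h', hm'⟩
      · exact Or.inl (sup_eq_bot_iff.mpr ⟨h, h'⟩)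
      · have h0 : x = ⊥ := h
        refine Or.inr ⟨by rw [h0, bot_sup_eq]; exact h', ?_⟩
        convert hm' using 2
        exact Subtype.ext (show x ⊔ x' = x' by rw [h0, bot_sup_eq])
    · rcases hq with h' | ⟨h', hm'⟩
      · have h0 : x' = ⊥ := h'
        refine Or.inr ⟨by rw [h0, sup_bot_eq]; exact h, ?_⟩
        convert hm using 2
        exact Subtype.ext (show x ⊔ x' = x by rw [h0, sup_bot_eq])
      · have hne : x ⊔ x' ≠ ⊥ := fun hb => h (le_bot_iff.mp (hb ▸ le_sup_left))
        refine Or.inr ⟨hne, ?_⟩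
        have heq : (⟨x ⊔ x', hne⟩ : {a : α // a ≠ ⊥}) = ⟨x, h⟩ ⊔ ⟨x', h'⟩ :=
          Subtype.ext rfl
        rw [heq]
        show b ∈ (↑(φ (⟨x, h⟩ ⊔ ⟨x', h'⟩)) : Set β)
        rw [hφ]
        exact ⟨hm, hm'⟩

/-- The section of a bi-ideal at a nonzero `x : α` is an ideal of `β`. -/
def secIdeal (I : Set (α × β)) (hI : IsBiIdeal I) (x : {a : α // a ≠ ⊥}) : Order.Ideal β :=
  Order.IsIdeal.toIdeal (I := {b : β | (x.1, b) ∈ I})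
    { IsLowerSet := fun a b h ha => hI.1 (x.1, a) ha (x.1, b) (Prod.mk_le_mk.mpr ⟨le_rfl, h⟩)
      Nonempty := ⟨⊥, hI.2.1 (Or.inr rfl)⟩
      Directed := fun a ha b hb =>
        ⟨a ⊔ b, hI.2.2.1 (x.1, a) ha (x.1, b) hb rfl, le_sup_left, le_sup_right⟩ }

lemma mem_secIdeal {I : Set (α × β)} {hI : IsBiIdeal I} {x : {a : α // a ≠ ⊥}} {b : β} :
    b ∈ secIdeal I hI x ↔ (x.1, b) ∈ I := Iff.rfl

lemma secIdeal_hom (I : Set (α × β)) (hI : IsBiIdeal I) (x y : {a : α // a ≠ ⊥}) :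
    (↑(secIdeal I hI (x ⊔ y)) : Set β) = ↑(secIdeal I hI x) ∩ ↑(secIdeal I hI y) := by
  ext b
  constructor
  · intro hb
    have hb' : (x.1 ⊔ y.1, b) ∈ I := hb
    exact ⟨hI.1 _ hb' (x.1, b) (Prod.mk_le_mk.mpr ⟨le_sup_left, le_rfl⟩),
      hI.1 _ hb' (y.1, b) (Prod.mk_le_mk.mpr ⟨le_sup_right, le_rfl⟩)⟩
  · rintro ⟨h1, h2⟩
    exact hI.2.2.2 (x.1, b) h1 (y.1, b) h2 rfl

end Aux

/-- `ε` is an order isomorphism between the homomorphisms from `⟨A∖{0}; ∨⟩` to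
`⟨Id B; ∩⟩` (ordered pointwise) and the bi-ideals of `A × B` (ordered by inclusion). -/
theorem stmt9 {α β : Type*} [SemilatticeSup α] [OrderBot α] [SemilatticeSup β] [OrderBot β] :
    ∃ e : {φ : {a : α // a ≠ ⊥} → Order.Ideal β //
        ∀ x y : {a : α // a ≠ ⊥}, (↑(φ (x ⊔ y)) : Set β) = ↑(φ x) ∩ ↑(φ y)} ≃o
          {I : Set (α × β) // IsBiIdeal I},
      ∀ φ, ((e φ : {I : Set (α × β) // IsBiIdeal I}) : Set (α × β)) = eps φ.1 := by
  refine ⟨{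
    toFun := fun φ => ⟨eps φ.1, isBiIdeal_eps φ.1 φ.2⟩
    invFun := fun I => ⟨secIdeal I.1 I.2, secIdeal_hom I.1 I.2⟩
    left_inv := ?_
    right_inv := ?_
    map_rel_iff' := ?_ }, fun φ => rfl⟩
  · rintro ⟨φ, hφ⟩
    refine Subtype.ext (funext fun x => SetLike.coe_injective ?_)
    ext b
    show (x.1, b) ∈ eps φ ↔ b ∈ φ x
    rw [mem_eps_iff]
    constructor
    · rintro (h | ⟨h, hm⟩)
      · exact absurd h x.2
      · rwa [show (⟨x.1, h⟩ : {a : α // a ≠ ⊥}) = x from Subtype.ext rfl] at hm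
    · intro hb
      exact Or.inr ⟨x.2, by rwa [show (⟨x.1, x.2⟩ : {a : α // a ≠ ⊥}) = x from Subtype.ext rfl]⟩
  · rintro ⟨I, hI⟩
    refine Subtype.ext ?_
    ext ⟨x, b⟩
    rw [mem_eps_iff]
    constructor
    · rintro (h | ⟨h, hm⟩)
      · exact hI.2.1 (Or.inl h)
      · exact hm
    · intro hp
      by_cases h : x = ⊥
      · exact Or.inl h
      · exact Or.inr ⟨h, hp⟩
  · rintro ⟨φ, hφ⟩ ⟨φ', hφ'⟩
    show eps φ ⊆ eps φ' ↔ _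
    rw [Subtype.mk_le_mk]
    constructor
    · intro hsub x b hb
      have : (x.1, b) ∈ eps φ := Or.inl ⟨x.2, by
        rwa [show (⟨x.1, x.2⟩ : {a : α // a ≠ ⊥}) = x from Subtype.ext rfl]⟩
      have h2 := hsub this
      rw [mem_eps_iff] at h2
      rcases h2 with h | ⟨h, hm⟩
      · exact absurd h x.2
      · rwa [show (⟨x.1, h⟩ : {a : α // a ≠ ⊥}) = x from Subtype.ext rfl] at hm
    · intro hle p hp
      rw [mem_eps_iff] at hp ⊢
      rcases hp with h | ⟨h, hm⟩
      · exact Or.inl h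
      · exact Or.inr ⟨h, hle ⟨p.1, h⟩ hm⟩
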